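/- arXiv:1707.07909 — 5 statements merged into one kernel-verified Lean document; each statement's English description precedes it below -/
import Mathlib

section
/- Let R be a simple Lie algebra over a field, graded by a (possibly nonabelian) group G. Then the subgroup of G generated by the support of the grading is abelian. -/
/-- A simple Lie algebra graded by a (possibly nonabelian) group `G`:
the subgroup generated by the support of the grading is abelian. -/
theorem stmt_0 {G : Type*} [Group G] [DecidableEq G] {k : Type*} [Field k]
    {L : Type*} [LieRing L] [LieAlgebra k L]
    (comp : G → Submodule k L)
    (hdir : DirectSum.IsInternal comp)
    (hbrack : ∀ (g h : G) (x y : L), x ∈ comp g → y ∈ comp h → ⁅x, y⁆ ∈ comp (g * h))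
    [LieAlgebra.IsSimple k L] :
    ∀ a ∈ Subgroup.closure {g : G | comp g ≠ ⊥},
      ∀ b ∈ Subgroup.closure {g : G | comp g ≠ ⊥}, a * b = b * a := by
  have ind := hdir.submodule_iSupIndep
  have htop := hdir.submodule_iSup_eq_top
  -- distinct components intersect trivially
  have hzero : ∀ a b : G, a ≠ b → ∀ x : L, x ∈ comp a → x ∈ comp b → x = 0 := by
    intro a b hab x hx1 hx2
    exact Submodule.disjoint_def.mp (ind.pairwiseDisjoint hab) x hx1 hx2
  -- the center is trivial
  have hcenter : ∀ x : L, (∀ z : L, ⁅x, z⁆ = 0) → x = 0 := by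
    intro x hx
    have hmem : x ∈ LieAlgebra.center k L := by
      rw [LieModule.mem_maxTrivSubmodule]
      intro z
      rw [← lie_skew, hx z, neg_zero]
    rcases LieAlgebra.IsSimple.eq_bot_or_eq_top (LieAlgebra.center k L) with h | h
    · rw [h, LieSubmodule.mem_bot] at hmem; exact hmem
    · exact absurd ((LieAlgebra.isLieAbelian_iff_center_eq_top k L).mpr h)
        (LieAlgebra.IsSimple.non_abelian k)
  -- key: elements of the support commute pairwise
  have key : ∀ g : G, comp g ≠ ⊥ → ∀ n : G, comp n ≠ ⊥ → n * g = g * n := by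
    intro g hg n hn
    by_contra hc
    -- the centralizer of all non-commuting components
    set Csub : Submodule k L :=
      { carrier := {z | ∀ m : G, ¬ m * g = g * m → ∀ x ∈ comp m, ⁅x, z⁆ = 0}
        add_mem' := fun {z} {w} hz hw m hm x hx => by
          rw [lie_add, hz m hm x hx, hw m hm x hx, add_zero]
        zero_mem' := fun m hm x hx => lie_zero x
        smul_mem' := fun c z hz m hm x hx => by
          rw [lie_smul, hz m hm x hx, smul_zero] } with hCsub
    have hCmem : ∀ z : L, z ∈ Csub ↔
        ∀ m : G, ¬ m * g = g * m → ∀ x ∈ comp m, ⁅x, z⁆ = 0 := fun z => Iff.rfl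
    -- Csub is a Lie ideal
    have hlie : ∀ (y : L) {z : L}, z ∈ Csub → ⁅y, z⁆ ∈ Csub := by
      intro y z hz
      have hy : y ∈ (⊤ : Submodule k L) := trivial
      rw [← htop] at hy
      refine Submodule.iSup_induction comp (motive := fun y => ⁅y, z⁆ ∈ Csub) hy ?_ ?_ ?_
      · intro m y hym
        by_cases hm : m * g = g * m
        · intro p hp x hx
          have hpm : ¬ (p * m) * g = g * (p * m) := by
            intro h
            apply hp
            have : p * g * m = g * p * m := by
              calc p * g * m = p * (g * m) := by rw [mul_assoc]
                _ = p * (m * g) := by rw [hm]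
                _ = (p * m) * g := by rw [mul_assoc]
                _ = g * (p * m) := h
                _ = g * p * m := by rw [mul_assoc]
            exact mul_right_cancel this
          have h1 : ⁅x, z⁆ = 0 := hz p hp x hx
          have h2 : ⁅(⁅x, y⁆ : L), z⁆ = 0 :=
            hz (p * m) hpm _ (hbrack p m x y hx hym)
          rw [leibniz_lie, h1, h2, lie_zero, add_zero]
        · have : ⁅y, z⁆ = 0 := hz m hm y hym
          rw [this]; exact Csub.zero_mem
      · show ⁅(0:L), z⁆ ∈ Csub
        rw [zero_lie]; exact Csub.zero_mem
      · intro a b ha hb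
        show ⁅a + b, z⁆ ∈ Csub
        rw [add_lie]; exact Csub.add_mem ha hb
    set C : LieIdeal k L :=
      { Csub with lie_mem := fun {y} {z} hz => hlie y hz } with hC
    -- comp g ≤ C
    have hgC : ∀ z ∈ comp g, z ∈ C := by
      intro z hzg m hm x hx
      have h1 : ⁅x, z⁆ ∈ comp (m * g) := hbrack m g x z hx hzg
      have h2 : ⁅x, z⁆ ∈ comp (g * m) := by
        have : (-⁅z, x⁆ : L) ∈ comp (g * m) := neg_mem (hbrack g m z x hzg hx)
        rwa [← lie_skew, neg_neg] at this
      exact hzero (m * g) (g * m) hm _ h1 h2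
    -- simplicity forces C = ⊤
    have hCtop : C = ⊤ := by
      rcases LieAlgebra.IsSimple.eq_bot_or_eq_top C with h | h
      · exfalso
        apply hg
        rw [eq_bot_iff]
        intro z hz
        have : z ∈ C := hgC z hz
        rw [h, LieSubmodule.mem_bot] at this
        simpa [this] using Submodule.zero_mem ⊥
      · exact h
    -- so comp n centralizes L, hence comp n = ⊥
    apply hn
    rw [eq_bot_iff]
    intro x hx
    have hx0 : x = 0 := by
      apply hcenter
      intro z
      have hzC : z ∈ C := by rw [hCtop]; exact LieSubmodule.mem_top z
      exact hzC n hc x hx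
    simpa [hx0] using Submodule.zero_mem (⊥ : Submodule k L)
  -- conclude for the closure
  intro a ha b hb
  have : Commute a b := by
    refine Subgroup.closure_induction₂ (p := fun x y _ _ => Commute x y)
      ?_ ?_ ?_ ?_ ?_ ?_ ?_ ha hb
    · intro x y hx hy; exact key y hy x hx
    · intro x _; exact Commute.one_left x
    · intro x _; exact Commute.one_right x
    · intro x y z _ _ _ h1 h2; exact h1.mul_left h2
    · intro y z x _ _ _ h1 h2; exact h1.mul_right h2
    · intro x y _ _ h; exact h.inv_left
    · intro x y _ _ h; exact h.inv_right
  exact this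
end

section
/- Let D be a real graded division algebra (grading group G abelian) with support T, identity component D_e, and fixed nonzero elements X_t ∈ D_t for each t ∈ T. Then the group of automorphisms of D as a graded algebra that act as the identity on D_e is isomorphic to the group Z^1(T, Z(D_e)^×) of 1-cocycles, where t ∈ T acts on Z(D_e)^× by z^t = X_t^{-1} z X_t. The isomorphism sends a cocycle ν to the automorphism ψ_0 given by ψ_0(X_t d) = X_t ν(t) d for d ∈ D_e. -/
/-!
An automorphism `ψ` of `D` fixing `D_e` is determined by `ν(t) = X_t⁻¹ ψ(X_t)`, which lies in
`Z(D_e)ˣ`; since every `y ∈ D_t` is `X_t` times an element of `D_e`, `ψ` acts on `D_t` as right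
multiplication by `ν(t)`. For `z ∈ Z(D_e)` and `y ∈ D_t` one has `z y = y (X_t⁻¹ z X_t)`, so
`ψ(x y) = ψ(x) ψ(y)` for `x ∈ D_s`, `y ∈ D_t` is exactly the cocycle identity
`ν(st) = X_t⁻¹ ν(s) X_t ν(t)`. Conversely, for a cocycle `ν`, right multiplication by `ν(t)` on each
`D_t` is a linear bijection and hence a graded automorphism fixing `D_e`.
-/

variable {G : Type*} [CommGroup G] [DecidableEq G] {D : Type*} [Ring D] [Algebra ℝ D]

/-- A real graded division algebra: the grading is an internal direct sum,
multiplicative, and all nonzero homogeneous elements are invertible. -/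
def IsGDA (comp : G → Submodule ℝ D) : Prop :=
  DirectSum.IsInternal comp ∧ (1 : D) ∈ comp 1 ∧
    (∀ (g h : G) (a b : D), a ∈ comp g → b ∈ comp h → a * b ∈ comp (g * h)) ∧
    ∀ (g : G) (a : D), a ∈ comp g → a ≠ 0 → IsUnit a

/-- Automorphisms of the graded algebra `D` that act as the identity on `D_e`. -/
def GrAutFixe (comp : G → Submodule ℝ D) (ψ : D ≃ₐ[ℝ] D) : Prop :=
  (∀ (g : G), ∀ x ∈ comp g, ψ x ∈ comp g) ∧ ∀ x ∈ comp (1 : G), ψ x = x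

/-- 1-cocycles `ν : T → Z(D_e)ˣ`, where `t ∈ T` acts on `Z(D_e)ˣ` by
`z ↦ X_t⁻¹ z X_t`, so the cocycle condition reads `ν(st) = (X_t⁻¹ ν(s) X_t) ν(t)`. -/
def IsCocycleZ1 (comp : G → Submodule ℝ D) (T : Subgroup G) (X : ↥T → Dˣ)
    (ν : ↥T → Dˣ) : Prop :=
  (∀ t : ↥T, ((ν t : D) ∈ comp (1 : G)) ∧
      ∀ z ∈ comp (1 : G), (ν t : D) * z = z * (ν t : D)) ∧
    ∀ s t : ↥T, ν (s * t) = (X t)⁻¹ * ν s * X t * ν t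

namespace DirectSum

variable {ι R A : Type*} [DecidableEq ι] [CommSemiring R] [Semiring A] [Algebra R A]
  {𝒜 : ι → Submodule R A} [Decomposition 𝒜]

variable (𝒜) in
noncomputable def gradedMulRight (v : ι → A) : A →ₗ[R] A :=
  toModule R ι A (fun g => LinearMap.mulRight R (v g) ∘ₗ (𝒜 g).subtype) ∘ₗ
    (decomposeLinearEquiv 𝒜).toLinearMap

theorem gradedMulRight_apply_of_mem (v : ι → A) {g : ι} {x : A} (hx : x ∈ 𝒜 g) :
    gradedMulRight 𝒜 v x = x * v g := by
  simp [gradedMulRight, decomposeLinearEquiv_apply, decompose_of_mem 𝒜 hx, ← lof_eq_of R]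

theorem gradedMulRight_one : gradedMulRight 𝒜 (fun _ => (1 : A)) = LinearMap.id :=
  decompose_lhom_ext 𝒜 fun g => LinearMap.ext fun x => by
    simp [gradedMulRight_apply_of_mem _ x.2]

variable [Group ι]

theorem coe_decompose_mul_of_left_mem_mul
    (hmul : ∀ ⦃g h : ι⦄ ⦃a b : A⦄, a ∈ 𝒜 g → b ∈ 𝒜 h → a * b ∈ 𝒜 (g * h))
    {g : ι} {u : A} (hu : u ∈ 𝒜 g) (x : A) (h : ι) :
    (decompose 𝒜 (u * x) (g * h) : A) = u * decompose 𝒜 x h := by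
  induction x using Decomposition.inductionOn 𝒜 with
  | zero => simp
  | add x y hx hy => simp [mul_add, hx, hy]
  | @homogeneous k x =>
    obtain rfl | hkh := eq_or_ne k h
    · rw [decompose_of_mem_same 𝒜 (hmul hu x.2), decompose_of_mem_same 𝒜 x.2]
    · rw [decompose_of_mem_ne 𝒜 (hmul hu x.2) (by simpa using hkh),
        decompose_of_mem_ne 𝒜 x.2 hkh, mul_zero]

theorem units_inv_mem
    (hmul : ∀ ⦃g h : ι⦄ ⦃a b : A⦄, a ∈ 𝒜 g → b ∈ 𝒜 h → a * b ∈ 𝒜 (g * h))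
    (hone : (1 : A) ∈ 𝒜 1) {g : ι} {u : Aˣ} (hu : (u : A) ∈ 𝒜 g) :
    ((u⁻¹ : Aˣ) : A) ∈ 𝒜 g⁻¹ := by
  have h := coe_decompose_mul_of_left_mem_mul hmul hu (u⁻¹ : Aˣ) g⁻¹
  rw [mul_inv_cancel, Units.mul_inv, decompose_of_mem_same 𝒜 hone,
    eq_comm, Units.mul_eq_one_iff_inv_eq] at h
  exact h ▸ (decompose 𝒜 _ g⁻¹).2

theorem gradedMulRight_mul
    (hmul : ∀ ⦃g h : ι⦄ ⦃a b : A⦄, a ∈ 𝒜 g → b ∈ 𝒜 h → a * b ∈ 𝒜 (g * h)) {v : ι → A}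
    (hv : ∀ ⦃g h : ι⦄ ⦃x y : A⦄, x ∈ 𝒜 g → y ∈ 𝒜 h → x * y * v (g * h) = x * v g * (y * v h))
    (a b : A) : gradedMulRight 𝒜 v (a * b) = gradedMulRight 𝒜 v a * gradedMulRight 𝒜 v b := by
  induction a using Decomposition.inductionOn 𝒜 with
  | zero => simp
  | add a a' ha ha' => simp [add_mul, ha, ha']
  | homogeneous x =>
    induction b using Decomposition.inductionOn 𝒜 with
    | zero => simp
    | add b b' hb hb' => simp [mul_add, hb, hb']
    | homogeneous y =>
      rw [gradedMulRight_apply_of_mem v (hmul x.2 y.2), gradedMulRight_apply_of_mem v x.2,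
        gradedMulRight_apply_of_mem v y.2, hv x.2 y.2]

theorem gradedMulRight_comp_gradedMulRight
    (hmul : ∀ ⦃g h : ι⦄ ⦃a b : A⦄, a ∈ 𝒜 g → b ∈ 𝒜 h → a * b ∈ 𝒜 (g * h)) {v : ι → A}
    (hv : ∀ g, v g ∈ 𝒜 1) (w : ι → A) :
    gradedMulRight 𝒜 w ∘ₗ gradedMulRight 𝒜 v = gradedMulRight 𝒜 (fun g => v g * w g) :=
  decompose_lhom_ext 𝒜 fun g => LinearMap.ext fun x => by
    have hxv : (x : A) * v g ∈ 𝒜 g := by simpa using hmul x.2 (hv g)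
    simp [gradedMulRight_apply_of_mem _ x.2, gradedMulRight_apply_of_mem _ hxv, mul_assoc]

variable (𝒜) in
noncomputable def gradedMulRightAlgEquiv
    (hmul : ∀ ⦃g h : ι⦄ ⦃a b : A⦄, a ∈ 𝒜 g → b ∈ 𝒜 h → a * b ∈ 𝒜 (g * h))
    (hone : (1 : A) ∈ 𝒜 1) (v : ι → Aˣ) (hv1 : ∀ g, (v g : A) ∈ 𝒜 1)
    (hv : ∀ ⦃g h : ι⦄ ⦃x y : A⦄, x ∈ 𝒜 g → y ∈ 𝒜 h →
      x * y * v (g * h) = x * v g * (y * v h)) : A ≃ₐ[R] A :=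
  have hv1' (g : ι) : (((v g)⁻¹ : Aˣ) : A) ∈ 𝒜 1 := by
    simpa using units_inv_mem hmul hone (hv1 g)
  have hv_one : v 1 = 1 :=
    mul_eq_left.mp (Units.ext (by simpa using (hv hone hone).symm))
  AlgEquiv.ofLinearEquiv
    (LinearEquiv.ofLinearMap (gradedMulRight 𝒜 fun g => v g) (gradedMulRight 𝒜 fun g => ↑(v g)⁻¹)
      (by simp [gradedMulRight_comp_gradedMulRight hmul hv1', gradedMulRight_one])
      (by simp [gradedMulRight_comp_gradedMulRight hmul hv1, gradedMulRight_one]))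
    (by simp [gradedMulRight_apply_of_mem _ hone, hv_one])
    (gradedMulRight_mul hmul hv)

theorem gradedMulRightAlgEquiv_apply_of_mem
    (hmul : ∀ ⦃g h : ι⦄ ⦃a b : A⦄, a ∈ 𝒜 g → b ∈ 𝒜 h → a * b ∈ 𝒜 (g * h))
    (hone : (1 : A) ∈ 𝒜 1) (v : ι → Aˣ) (hv1 : ∀ g, (v g : A) ∈ 𝒜 1)
    (hv : ∀ ⦃g h : ι⦄ ⦃x y : A⦄, x ∈ 𝒜 g → y ∈ 𝒜 h →
      x * y * v (g * h) = x * v g * (y * v h)) {g : ι} {x : A} (hx : x ∈ 𝒜 g) :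
    gradedMulRightAlgEquiv 𝒜 hmul hone v hv1 hv x = x * v g :=
  gradedMulRight_apply_of_mem _ hx

end DirectSum

namespace IsGDA

variable {comp : G → Submodule ℝ D}

theorem mul_mem (hgda : IsGDA comp) ⦃g h : G⦄ ⦃a b : D⦄ (ha : a ∈ comp g) (hb : b ∈ comp h) :
    a * b ∈ comp (g * h) :=
  hgda.2.2.1 g h a b ha hb

theorem units_inv_mem (hgda : IsGDA comp) {g : G} {u : Dˣ} (hu : (u : D) ∈ comp g) :
    ((u⁻¹ : Dˣ) : D) ∈ comp g⁻¹ :=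
  letI := hgda.1.chooseDecomposition
  DirectSum.units_inv_mem hgda.mul_mem hgda.2.1 hu

theorem units_inv_mul_mem_one (hgda : IsGDA comp) {g : G} {u : Dˣ} {y : D}
    (hu : (u : D) ∈ comp g) (hy : y ∈ comp g) : ((u⁻¹ : Dˣ) : D) * y ∈ comp 1 := by
  simpa using hgda.mul_mem (hgda.units_inv_mem hu) hy

theorem mul_units_inv_mem_one (hgda : IsGDA comp) {g : G} {u : Dˣ} {y : D}
    (hu : (u : D) ∈ comp g) (hy : y ∈ comp g) : y * ((u⁻¹ : Dˣ) : D) ∈ comp 1 := by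
  simpa using hgda.mul_mem hy (hgda.units_inv_mem hu)

/-- The action `z ↦ u⁻¹ z u` on `Z(D_e)` depends only on the degree of the homogeneous unit `u`. -/
theorem mul_conj_eq (hgda : IsGDA comp) {g : G} {u : Dˣ} {y z : D} (hu : (u : D) ∈ comp g)
    (hy : y ∈ comp g) (hz : ∀ m ∈ comp 1, z * m = m * z) :
    y * (((u⁻¹ : Dˣ) : D) * z * u) = z * y := by
  have hyu := hz _ (hgda.mul_units_inv_mem_one hu hy)
  calc y * (((u⁻¹ : Dˣ) : D) * z * u) = y * ((u⁻¹ : Dˣ) : D) * z * u := by simp only [mul_assoc]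
    _ = z * y := by rw [← hyu, mul_assoc, mul_assoc, Units.inv_mul, mul_one]

end IsGDA

theorem eq_zero_of_mem_of_notMem {ι : Type*} {comp : ι → Submodule ℝ D} {S : Set ι}
    (hS : ∀ g, comp g ≠ ⊥ → g ∈ S) {g : ι} (hg : g ∉ S) {x : D} (hx : x ∈ comp g) :
    x = 0 := by
  rwa [not_not.mp (mt (hS g) hg), Submodule.mem_bot] at hx

def autCocycle {ι : Type*} (X : ι → Dˣ) (ψ : D ≃ₐ[ℝ] D) (t : ι) : Dˣ :=
  (X t)⁻¹ * Units.map (ψ : D →* D) (X t)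

section autCocycle

variable {ι : Type*} (X : ι → Dˣ)

theorem coe_autCocycle (ψ : D ≃ₐ[ℝ] D) (t : ι) :
    (autCocycle X ψ t : D) = ((X t)⁻¹ : Dˣ) * ψ (X t) := by
  simp [autCocycle]

theorem apply_eq_mul_autCocycle (ψ : D ≃ₐ[ℝ] D) (t : ι) : ψ (X t) = X t * autCocycle X ψ t := by
  rw [coe_autCocycle, Units.mul_inv_cancel_left]

theorem autCocycle_trans {ψ₁ ψ₂ : D ≃ₐ[ℝ] D} {t : ι}
    (h : ψ₁ (autCocycle X ψ₂ t) = autCocycle X ψ₂ t) :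
    autCocycle X (ψ₂.trans ψ₁) t = autCocycle X ψ₁ t * autCocycle X ψ₂ t :=
  Units.ext <| by
    rw [Units.val_mul, coe_autCocycle, coe_autCocycle, AlgEquiv.trans_apply,
      apply_eq_mul_autCocycle, map_mul, h, mul_assoc]

end autCocycle

namespace GrAutFixe

variable {comp : G → Submodule ℝ D} {ψ : D ≃ₐ[ℝ] D}

theorem units_inv_mul_apply_mem_one (hgda : IsGDA comp) (hψ : GrAutFixe comp ψ) {g : G}
    {u : Dˣ} (hu : (u : D) ∈ comp g) : ((u⁻¹ : Dˣ) : D) * ψ u ∈ comp 1 :=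
  hgda.units_inv_mul_mem_one hu (hψ.1 g u hu)

theorem units_inv_mul_apply_mul_comm (hgda : IsGDA comp) (hψ : GrAutFixe comp ψ) {g : G}
    {u : Dˣ} (hu : (u : D) ∈ comp g) {z : D} (hz : z ∈ comp 1) :
    ((u⁻¹ : Dˣ) : D) * ψ u * z = z * (((u⁻¹ : Dˣ) : D) * ψ u) := by
  have hz' : (u : D) * z * ((u⁻¹ : Dˣ) : D) ∈ comp 1 := by
    simpa using hgda.mul_mem (hgda.mul_mem hu hz) (hgda.units_inv_mem hu)
  have hconj : ψ u * z = u * z * ((u⁻¹ : Dˣ) : D) * ψ u := by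
    calc ψ u * z = ψ (u * z * ((u⁻¹ : Dˣ) : D) * u) := by
          rw [Units.inv_mul_cancel_right, map_mul, hψ.2 z hz]
      _ = u * z * ((u⁻¹ : Dˣ) : D) * ψ u := by rw [map_mul, hψ.2 _ hz']
  rw [mul_assoc, hconj]
  simp [mul_assoc]

theorem apply_of_mem (hgda : IsGDA comp) (hψ : GrAutFixe comp ψ) {g : G} {u : Dˣ}
    (hu : (u : D) ∈ comp g) {y : D} (hy : y ∈ comp g) :
    ψ y = y * (((u⁻¹ : Dˣ) : D) * ψ u) := by
  have hd := hgda.units_inv_mul_mem_one hu hy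
  calc ψ y = ψ (u * (((u⁻¹ : Dˣ) : D) * y)) := by rw [Units.mul_inv_cancel_left]
    _ = u * ((((u⁻¹ : Dˣ) : D) * ψ u) * (((u⁻¹ : Dˣ) : D) * y)) := by
      rw [map_mul, hψ.2 _ hd, ← mul_assoc (u : D), Units.mul_inv_cancel_left]
    _ = y * (((u⁻¹ : Dˣ) : D) * ψ u) := by
      rw [units_inv_mul_apply_mul_comm hgda hψ hu hd, ← mul_assoc, Units.mul_inv_cancel_left]

end GrAutFixe

section Cocycle

variable {comp : G → Submodule ℝ D} {T : Subgroup G} {X : ↥T → Dˣ}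

theorem GrAutFixe.isCocycleZ1 {ψ : D ≃ₐ[ℝ] D} (hgda : IsGDA comp) (hψ : GrAutFixe comp ψ)
    (hX : ∀ t : ↥T, (X t : D) ∈ comp (t : G)) : IsCocycleZ1 comp T X (autCocycle X ψ) := by
  have hcentral (t : ↥T) : (autCocycle X ψ t : D) ∈ comp 1 ∧
      ∀ z ∈ comp 1, (autCocycle X ψ t : D) * z = z * autCocycle X ψ t := by
    rw [coe_autCocycle]
    exact ⟨hψ.units_inv_mul_apply_mem_one hgda (hX t),
      fun z hz => hψ.units_inv_mul_apply_mul_comm hgda (hX t) hz⟩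
  refine ⟨hcentral, fun s t => Units.ext <| (Units.mul_right_inj (X s * X t)).mp ?_⟩
  have hst : (X s * X t : D) ∈ comp (s * t : ↥T) := hgda.mul_mem (hX s) (hX t)
  push_cast
  calc (X s * X t : D) * autCocycle X ψ (s * t) = ψ (X s * X t) := by
        rw [hψ.apply_of_mem hgda (hX (s * t)) hst, coe_autCocycle]
    _ = X s * (autCocycle X ψ s * X t) * autCocycle X ψ t := by
        simp only [map_mul, apply_eq_mul_autCocycle, mul_assoc]
    _ = X s * (X t * (((X t)⁻¹ : Dˣ) * autCocycle X ψ s * X t)) * autCocycle X ψ t := by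
        rw [hgda.mul_conj_eq (hX t) (hX t) (hcentral s).2]
    _ = _ := by simp only [mul_assoc]

theorem GrAutFixe.ext_of_autCocycle_eq {ψ₁ ψ₂ : D ≃ₐ[ℝ] D} (hgda : IsGDA comp)
    (hT : ∀ g : G, comp g ≠ ⊥ → g ∈ T) (hX : ∀ t : ↥T, (X t : D) ∈ comp (t : G))
    (h₁ : GrAutFixe comp ψ₁) (h₂ : GrAutFixe comp ψ₂) (h : autCocycle X ψ₁ = autCocycle X ψ₂) :
    ψ₁ = ψ₂ := by
  let _ := hgda.1.chooseDecomposition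
  refine AlgEquiv.toLinearMap_injective <| DirectSum.decompose_lhom_ext comp fun g =>
    LinearMap.ext fun ⟨x, hx⟩ => ?_
  change ψ₁ x = ψ₂ x
  by_cases hg : g ∈ T
  · lift g to T using hg
    rw [h₁.apply_of_mem hgda (hX g) hx, h₂.apply_of_mem hgda (hX g) hx, ← coe_autCocycle,
      ← coe_autCocycle, h]
  · simp [eq_zero_of_mem_of_notMem (S := T) hT hg hx]

theorem IsCocycleZ1.mul_apply_mul_eq {ν : ↥T → Dˣ} (hgda : IsGDA comp)
    (hX : ∀ t : ↥T, (X t : D) ∈ comp (t : G)) (hν : IsCocycleZ1 comp T X ν) (s : ↥T)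
    {t : ↥T} {y : D} (hy : y ∈ comp t) : y * ν (s * t) = ν s * y * ν t := by
  rw [hν.2 s t, Units.val_mul, Units.val_mul, Units.val_mul, ← mul_assoc,
    hgda.mul_conj_eq (hX t) hy (hν.1 s).2]

theorem IsCocycleZ1.exists_grAutFixe {ν : ↥T → Dˣ} (hgda : IsGDA comp)
    (hT : ∀ g : G, comp g ≠ ⊥ → g ∈ T) (hX : ∀ t : ↥T, (X t : D) ∈ comp (t : G))
    (hν : IsCocycleZ1 comp T X ν) : ∃ ψ, GrAutFixe comp ψ ∧ autCocycle X ψ = ν := by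
  classical
  let _ := hgda.1.chooseDecomposition
  set v : G → Dˣ := fun g => if h : g ∈ T then ν ⟨g, h⟩ else 1
  have hv_coe (t : ↥T) : v t = ν t := by simp [v]
  have hv1 (g : G) : (v g : D) ∈ comp 1 := by
    by_cases hg : g ∈ T
    · lift g to T using hg
      exact hv_coe g ▸ (hν.1 g).1
    · simpa [v, hg] using hgda.2.1
  have hv ⦃g h : G⦄ ⦃x y : D⦄ (hx : x ∈ comp g) (hy : y ∈ comp h) :
      x * y * v (g * h) = x * v g * (y * v h) := by
    by_cases hg : g ∈ T
    · by_cases hh : h ∈ T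
      · lift g to T using hg
        lift h to T using hh
        rw [← Subgroup.coe_mul, hv_coe, hv_coe, hv_coe, mul_assoc x,
          hν.mul_apply_mul_eq hgda hX g hy]
        simp only [mul_assoc]
      · simp [eq_zero_of_mem_of_notMem (S := T) hT hh hy]
    · simp [eq_zero_of_mem_of_notMem (S := T) hT hg hx]
  set ψ := DirectSum.gradedMulRightAlgEquiv comp hgda.mul_mem hgda.2.1 v hv1 hv
  have hψ_apply {g : G} {x : D} (hx : x ∈ comp g) : ψ x = x * v g :=
    DirectSum.gradedMulRightAlgEquiv_apply_of_mem _ _ _ _ _ hx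
  have hv_one : (v 1 : D) = 1 := by simpa [hψ_apply hgda.2.1] using ψ.map_one
  refine ⟨ψ, ⟨fun g x hx => ?_, fun x hx => ?_⟩, funext fun t => Units.ext ?_⟩
  · simpa [hψ_apply hx] using hgda.mul_mem hx (hv1 g)
  · rw [hψ_apply hx, hv_one, mul_one]
  · rw [coe_autCocycle, hψ_apply (hX t), hv_coe, Units.inv_mul_cancel_left]

end Cocycle

/-- The group of automorphisms of the graded algebra `D` acting trivially on `D_e`
is isomorphic to `Z¹(T, Z(D_e)ˣ)`: the correspondence `ψ₀ ↦ ν`, determined by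
`ψ₀(X_t d) = X_t ν(t) d` for `d ∈ D_e`, is a bijection onto the group of cocycles
turning composition into pointwise product. -/
theorem stmt_2 (comp : G → Submodule ℝ D) (hgda : IsGDA comp)
    (T : Subgroup G) (hT : ∀ g : G, comp g ≠ ⊥ ↔ g ∈ T)
    (X : ↥T → Dˣ) (hX : ∀ t : ↥T, (X t : D) ∈ comp (t : G)) :
    ∃ F : (D ≃ₐ[ℝ] D) → (↥T → Dˣ),
      (∀ ψ, GrAutFixe comp ψ → IsCocycleZ1 comp T X (F ψ) ∧
        ∀ (t : ↥T), ∀ d ∈ comp (1 : G), ψ ((X t : D) * d) = (X t : D) * (F ψ t : D) * d) ∧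
      (∀ ψ₁ ψ₂, GrAutFixe comp ψ₁ → GrAutFixe comp ψ₂ → F ψ₁ = F ψ₂ → ψ₁ = ψ₂) ∧
      (∀ ν : ↥T → Dˣ, IsCocycleZ1 comp T X ν →
        ∃ ψ, GrAutFixe comp ψ ∧ F ψ = ν) ∧
      (∀ ψ₁ ψ₂, GrAutFixe comp ψ₁ → GrAutFixe comp ψ₂ →
        ∀ t : ↥T, F (ψ₂.trans ψ₁) t = F ψ₁ t * F ψ₂ t) := by
  have hT' (g : G) : comp g ≠ ⊥ → g ∈ T := (hT g).1
  refine ⟨autCocycle X, fun ψ hψ => ⟨hψ.isCocycleZ1 hgda hX, fun t d hd => ?_⟩,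
    fun ψ₁ ψ₂ h₁ h₂ => GrAutFixe.ext_of_autCocycle_eq hgda hT' hX h₁ h₂,
    fun ν hν => hν.exists_grAutFixe hgda hT' hX,
    fun ψ₁ ψ₂ h₁ h₂ t => autCocycle_trans X (h₁.2 _ ((h₂.isCocycleZ1 hgda hX).1 t).1)⟩
  rw [map_mul, hψ.2 d hd, apply_eq_mul_autCocycle]
end

section
/- Let D be a real graded division algebra with D_e ≅ ℂ and D_e not contained in Z(D). Let K = {t ∈ T | Int(X_t) restricts to the identity on D_e}, an index-2 subgroup of T. Then there is a split short exact sequence 1 → U → Z^1(T, D_e^×) → Hom^+(K, ℝ^×) → 1, where U is the unit circle in ℂ, Hom^+(K,ℝ^×) = {χ ∈ Hom(K,ℝ^×) | χ(t²) > 0 for all t ∈ T}, and the map is restriction of cocycles to K. -/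
/-!
Fix `t₀ ∉ K`. Since `T` is abelian, comparing the cocycle identity for `s * t₀` and `t₀ * s` with
`s ∈ K` gives `conj (ν s) = ν s`, so a cocycle is real on `K`, and `ν (t * t)` is `(ν t)²` with
`ν t` real or `|ν t|²`, hence positive. A cocycle trivial on `K` is determined by `z = ν t₀`, and
`|z|² = ν (t₀ * t₀) = 1`. Conversely, every real-valued homomorphism is a cocycle, and
`χ : K →* ℝˣ` extends to one on `T` by sending `t₀` to a square root of `χ (t₀ * t₀)`; taking
`√|χ (t₀ * t₀)|` makes the section multiplicative in `χ`.
-/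

/-- Cocycles `ν : T → ℂˣ` for the action of `T` on `ℂˣ = D_eˣ` which is trivial on
`K` and complex conjugation on `T ∖ K`. -/
def IsCocycle3 {T : Type*} [CommGroup T] (K : Subgroup T) [DecidablePred (· ∈ K)] (ν : T → ℂˣ) : Prop :=
  ∀ s t : T, (ν (s * t) : ℂ) =
    (if t ∈ K then (ν s : ℂ) else (starRingEnd ℂ) (ν s : ℂ)) * (ν t : ℂ)

namespace Subgroup

theorem mul_inv_mem_of_index_two {G : Type*} [Group G] {H : Subgroup G} (hH : H.index = 2)
    {a b : G} (ha : a ∉ H) (hb : b ∉ H) : a * b⁻¹ ∈ H :=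
  (mul_mem_iff_of_index_two hH).2 (iff_of_false ha (by rwa [inv_mem_iff]))

section Extension

variable {T G : Type*} [CommGroup T] [CommGroup G] {K : Subgroup T} [DecidablePred (· ∈ K)]
  (hK : K.index = 2) {t₀ : T} (ht₀ : t₀ ∉ K)

def extendOfIndexTwo (χ : K →* G) (c : G) (t : T) : G :=
  if h : t ∈ K then χ ⟨t, h⟩ else χ ⟨t * t₀⁻¹, K.mul_inv_mem_of_index_two hK h ht₀⟩ * c

theorem extendOfIndexTwo_coe (χ : K →* G) (c : G) (s : K) :
    extendOfIndexTwo hK ht₀ χ c s = χ s :=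
  dif_pos s.2

theorem extendOfIndexTwo_mul_mul (χ₁ χ₂ : K →* G) (c₁ c₂ : G) (t : T) :
    extendOfIndexTwo hK ht₀ (χ₁ * χ₂) (c₁ * c₂) t =
      extendOfIndexTwo hK ht₀ χ₁ c₁ t * extendOfIndexTwo hK ht₀ χ₂ c₂ t := by
  unfold extendOfIndexTwo
  split_ifs
  · rfl
  · exact mul_mul_mul_comm _ _ _ _

theorem extendOfIndexTwo_mul {χ : K →* G} {c : G}
    (hc : c * c = χ ⟨t₀ * t₀, K.mul_self_mem_of_index_two hK t₀⟩) (s t : T) :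
    extendOfIndexTwo hK ht₀ χ c (s * t) =
      extendOfIndexTwo hK ht₀ χ c s * extendOfIndexTwo hK ht₀ χ c t := by
  have hχ : ∀ {a b d : T} (ha : a ∈ K) (hb : b ∈ K) (hd : d ∈ K), a = b * d →
      χ ⟨a, ha⟩ = χ ⟨b, hb⟩ * χ ⟨d, hd⟩ := by
    rintro a b d - hb hd rfl
    exact map_mul χ ⟨b, hb⟩ ⟨d, hd⟩
  have hmul := fun {a b : T} => K.mul_mem_iff_of_index_two hK (a := a) (b := b)
  have hinv := fun {a : T} (ha : a ∉ K) => K.mul_inv_mem_of_index_two hK ha ht₀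
  unfold extendOfIndexTwo
  by_cases hs : s ∈ K <;> by_cases ht : t ∈ K
  · rw [dif_pos (hmul.2 (iff_of_true hs ht)), dif_pos hs, dif_pos ht, hχ _ hs ht rfl]
  · rw [dif_neg fun h => ht ((hmul.1 h).1 hs), dif_pos hs, dif_neg ht,
      hχ _ hs (hinv ht) (mul_assoc s t t₀⁻¹), mul_assoc]
  · rw [dif_neg fun h => hs ((hmul.1 h).2 ht), dif_neg hs, dif_pos ht,
      hχ _ (hinv hs) ht (mul_right_comm s t t₀⁻¹), mul_right_comm]
  · rw [dif_pos (hmul.2 (iff_of_false hs ht)), dif_neg hs, dif_neg ht, mul_mul_mul_comm, hc,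
      ← hχ (K.mul_mem (hinv hs) (hinv ht)) (hinv hs) (hinv ht) rfl,
      ← hχ _ (K.mul_mem (hinv hs) (hinv ht)) (K.mul_self_mem_of_index_two hK t₀)]
    rw [mul_mul_mul_comm, inv_mul_cancel_right, inv_mul_cancel_right]

end Extension

end Subgroup

namespace Units

noncomputable def sqrtAbs (x : ℝˣ) : ℝˣ :=
  Units.mk0 √|(x : ℝ)| (Real.sqrt_ne_zero'.2 (abs_pos.2 x.ne_zero))

theorem sqrtAbs_mul (x y : ℝˣ) : sqrtAbs (x * y) = sqrtAbs x * sqrtAbs y := by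
  ext
  simp only [sqrtAbs, val_mk0, val_mul, abs_mul, Real.sqrt_mul (abs_nonneg _)]

theorem sqrtAbs_mul_self {x : ℝˣ} (hx : 0 < (x : ℝ)) : sqrtAbs x * sqrtAbs x = x := by
  ext
  rw [val_mul, sqrtAbs, val_mk0, Real.mul_self_sqrt (abs_nonneg _), abs_of_pos hx]

end Units

open ComplexConjugate

section Cocycle

variable {T : Type*} [CommGroup T] {K : Subgroup T} [DecidablePred (· ∈ K)] {ν : T → ℂˣ}

namespace IsCocycle3

theorem conj_eq_of_mem (hν : IsCocycle3 K ν) {t₀ s : T} (ht₀ : t₀ ∉ K) (hs : s ∈ K) :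
    conj (ν s : ℂ) = ν s := by
  have h := hν s t₀
  rw [if_neg ht₀, mul_comm, hν t₀ s, if_pos hs, mul_comm] at h
  exact (mul_right_cancel₀ (ν t₀).ne_zero h).symm

theorem im_eq_zero_of_mem (hν : IsCocycle3 K ν) {t₀ s : T} (ht₀ : t₀ ∉ K) (hs : s ∈ K) :
    (ν s : ℂ).im = 0 :=
  Complex.conj_eq_iff_im.1 (hν.conj_eq_of_mem ht₀ hs)

theorem apply_mul_self_of_notMem (hν : IsCocycle3 K ν) {t : T} (ht : t ∉ K) :
    (ν (t * t) : ℂ) = Complex.normSq (ν t) := by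
  rw [hν, if_neg ht, Complex.normSq_eq_conj_mul_self]

theorem re_apply_mul_self_pos (hν : IsCocycle3 K ν) {t₀ : T} (ht₀ : t₀ ∉ K) (t : T) :
    0 < (ν (t * t) : ℂ).re := by
  by_cases ht : t ∈ K
  · have him := hν.im_eq_zero_of_mem ht₀ ht
    have hre : (ν t : ℂ).re ≠ 0 := fun hre => (ν t).ne_zero (Complex.ext hre him)
    rw [hν, if_pos ht, Complex.mul_re, him, mul_zero, sub_zero]
    exact mul_self_pos.2 hre
  · rw [hν.apply_mul_self_of_notMem ht, Complex.ofReal_re]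
    exact Complex.normSq_pos.2 (ν t).ne_zero

theorem norm_eq_one_of_eq_one_on (hν : IsCocycle3 K ν) (h1 : ∀ s ∈ K, ν s = 1) {t : T}
    (ht : t ∉ K) (htt : t * t ∈ K) : ‖(ν t : ℂ)‖ = 1 := by
  have h := hν.apply_mul_self_of_notMem ht
  rw [h1 _ htt, Units.val_one, ← Complex.sq_norm] at h
  exact (pow_eq_one_iff_of_nonneg (norm_nonneg _) two_ne_zero).1 (by exact_mod_cast h.symm)

theorem eq_ite_of_eq_one_on (hK : K.index = 2) (hν : IsCocycle3 K ν) (h1 : ∀ s ∈ K, ν s = 1)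
    {t₀ : T} (ht₀ : t₀ ∉ K) : ν = fun t => if t ∈ K then 1 else ν t₀ := by
  funext t
  split_ifs with ht
  · exact h1 t ht
  · ext
    rw [← inv_mul_cancel_right t t₀, hν, if_neg ht₀, h1 _ (K.mul_inv_mem_of_index_two hK ht ht₀),
      Units.val_one, map_one, one_mul]

end IsCocycle3

theorem isCocycle3_ite (hK : K.index = 2) {z : ℂˣ} (hz : ‖(z : ℂ)‖ = 1) :
    IsCocycle3 K fun t => if t ∈ K then 1 else z := by
  have hz' : conj (z : ℂ) * z = 1 := by
    rw [← Complex.normSq_eq_conj_mul_self, ← Complex.sq_norm, hz, one_pow, Complex.ofReal_one]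
  intro s t
  have hst := K.mul_mem_iff_of_index_two hK (a := s) (b := t)
  by_cases hs : s ∈ K <;> by_cases ht : t ∈ K <;> simp [hs, ht, hst, hz']

theorem isCocycle3_ofReal (f : T → ℝˣ) (hf : ∀ s t, f (s * t) = f s * f t) :
    IsCocycle3 K fun t => Units.map (Complex.ofRealHom : ℝ →* ℂ) (f t) := by
  intro s t
  simp [hf, Complex.conj_ofReal]

end Cocycle

/-- The split short exact sequence `1 → U → Z¹(T, D_eˣ) → Hom⁺(K, ℝˣ) → 1`:
(a) the restriction of any cocycle to `K` is real-valued and positive on squares,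
(b) the kernel of restriction consists exactly of the cocycles equal to `1` on `K`
and to a constant unit-circle value on `T ∖ K`, and
(c) restriction admits a multiplicative section defined on
`Hom⁺(K, ℝˣ) = {χ | χ(t²) > 0 ∀ t ∈ T}`. -/
theorem stmt_3 {T : Type*} [CommGroup T] (K : Subgroup T) [DecidablePred (· ∈ K)] (hK : K.index = 2)
    (hsq : ∀ t : T, t * t ∈ K) :
    (∀ ν : T → ℂˣ, IsCocycle3 K ν →
        (∀ s ∈ K, ((ν s : ℂ)).im = 0) ∧ ∀ t : T, 0 < ((ν (t * t) : ℂ)).re) ∧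
    (∀ ν : T → ℂˣ,
        (IsCocycle3 K ν ∧ ∀ s ∈ K, ν s = 1) ↔
          ∃ z : ℂˣ, ‖(z : ℂ)‖ = 1 ∧ ν = fun t => if t ∈ K then 1 else z) ∧
    ∃ sec : (↥K →* ℝˣ) → (T → ℂˣ),
      (∀ χ : ↥K →* ℝˣ, (∀ t : T, (0 : ℝ) < (χ ⟨t * t, hsq t⟩ : ℝ)) →
          IsCocycle3 K (sec χ) ∧ ∀ s : ↥K, ((sec χ (s : T)) : ℂ) = ((χ s : ℝ) : ℂ)) ∧
      ∀ χ₁ χ₂ : ↥K →* ℝˣ, sec (χ₁ * χ₂) = fun t => sec χ₁ t * sec χ₂ t := by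
  obtain ⟨t₀, ht₀, -⟩ := Subgroup.index_eq_two_iff_exists_notMem_and.1 hK
  let extend (χ : ↥K →* ℝˣ) : T → ℝˣ :=
    K.extendOfIndexTwo hK ht₀ χ (Units.sqrtAbs (χ ⟨t₀ * t₀, hsq t₀⟩))
  refine ⟨fun ν hν => ⟨fun _ hs => hν.im_eq_zero_of_mem ht₀ hs, hν.re_apply_mul_self_pos ht₀⟩,
    fun ν => ⟨fun ⟨hν, h1⟩ => ?_, ?_⟩,
    fun χ t => Units.map (Complex.ofRealHom : ℝ →* ℂ) (extend χ t), fun χ hχ => ⟨?_, ?_⟩, ?_⟩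
  · exact ⟨ν t₀, hν.norm_eq_one_of_eq_one_on h1 ht₀ (hsq t₀), hν.eq_ite_of_eq_one_on hK h1 ht₀⟩
  · rintro ⟨z, hz, rfl⟩
    exact ⟨isCocycle3_ite hK hz, fun s hs => if_pos hs⟩
  · exact isCocycle3_ofReal _ <| K.extendOfIndexTwo_mul hK ht₀ (Units.sqrtAbs_mul_self (hχ t₀))
  · intro s
    simp [extend, Subgroup.extendOfIndexTwo_coe]
  · intro χ₁ χ₂
    funext t
    simp only [extend, MonoidHom.mul_apply, Units.sqrtAbs_mul, Subgroup.extendOfIndexTwo_mul_mul,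
      map_mul]
end

section
/- Let D be a real graded division algebra with a degree-preserving involution φ_0. Two degree-preserving involutions φ_0 and φ_0' on D satisfy φ_0' = Int(d) φ_0 for some nonzero homogeneous d with φ_0(d) ∈ {±d} (i.e. φ_0 ∼ φ_0') if and only if φ_0' φ_0^{-1} is an inner automorphism of D, except possibly when ℂ ≅ D_e ⊆ Z(D), in which case the same conclusion still holds after replacing d by dz for a suitable z ∈ D_e. -/
variable {G : Type*} [CommGroup G] [DecidableEq G] {D : Type*} [Ring D] [Algebra ℝ D]

/-!
Write `ψ = φ₀' φ₀` and call `d` an intertwiner of `ψ` when `d x = ψ(x) d` for all `x`; thus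
`ψ = Int(u)` says that the unit `u` is an intertwiner. Since `ψ` preserves degrees, comparing
homogeneous components in `u x = ψ(x) u` shows that every homogeneous component of `u` is again an
intertwiner; pick a nonzero one, `d₀`. Because `φ₀` is an involutive anti-automorphism, `φ₀(d₀)`
is an intertwiner too, and so is the `φ₀`-symmetric homogeneous element `d₀ + φ₀(d₀)`. Either it
is nonzero, hence invertible, or `φ₀(d₀) = -d₀`; in both cases we get a homogeneous unit `d` with
`φ₀(d) = ±d` and `φ₀' = Int(d) φ₀`.
-/

def Intertwines {A : Type*} [Mul A] (ψ : A → A) (d : A) : Prop :=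
  ∀ x, d * x = ψ x * d

namespace Intertwines

theorem add {A : Type*} [NonUnitalNonAssocSemiring A] {ψ : A → A} {d e : A}
    (hd : Intertwines ψ d) (he : Intertwines ψ e) : Intertwines ψ (d + e) := fun x => by
  rw [add_mul, mul_add, hd x, he x]

theorem map_of_antiInvolution {A : Type*} [Mul A] {φ φ' : A → A} {d : A}
    (hanti : ∀ x y, φ (x * y) = φ y * φ x) (hinvol : ∀ x, φ (φ x) = x)
    (hinvol' : ∀ x, φ' (φ' x) = x) (hd : Intertwines (φ' ∘ φ) d) :
    Intertwines (φ' ∘ φ) (φ d) := fun x => by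
  have h := congrArg φ (hd (φ (φ' (φ x))))
  simp only [Function.comp_apply, hinvol, hinvol', hanti] at h
  exact h.symm

theorem eq_conj {A : Type*} [Monoid A] {φ φ' : A → A} (hinvol : ∀ x, φ (φ x) = x) {w : Aˣ}
    (hw : Intertwines (φ' ∘ φ) (w : A)) (x : A) : φ' x = w * φ x * (↑w⁻¹ : A) := by
  have h := hw (φ x)
  simp only [Function.comp_apply, hinvol] at h
  rw [h, mul_assoc, Units.mul_inv, mul_one]

theorem coe_decompose {ι A σ F : Type*} [DecidableEq ι] [AddCancelCommMonoid ι] [Semiring A]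
    [SetLike σ A] [AddSubmonoidClass σ A] {𝒜 : ι → σ} [GradedRing 𝒜]
    [FunLike F A A] [AddMonoidHomClass F A A] {ψ : F} (hψ : ∀ j, ∀ x ∈ 𝒜 j, ψ x ∈ 𝒜 j) {u : A}
    (hu : Intertwines ψ u) (i : ι) : Intertwines ψ (DirectSum.decompose 𝒜 u i : A) := by
  have homogeneous : ∀ j, ∀ x ∈ 𝒜 j, (DirectSum.decompose 𝒜 u i : A) * x
      = ψ x * DirectSum.decompose 𝒜 u i := fun j x hx => by
    rw [← DirectSum.coe_decompose_mul_add_of_right_mem 𝒜 hx,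
      ← DirectSum.coe_decompose_mul_add_of_left_mem 𝒜 (hψ j x hx), hu x, add_comm]
  classical
  intro x
  rw [← DirectSum.sum_support_decompose 𝒜 x, map_sum, Finset.mul_sum, Finset.sum_mul]
  exact Finset.sum_congr rfl fun j _ => homogeneous j _ (SetLike.coe_mem _)

end Intertwines

namespace IsGDA

noncomputable abbrev gradedRing {comp : G → Submodule ℝ D} (hgda : IsGDA comp) :
    GradedRing (fun i : Additive G => comp i.toMul) where
  one_mem := hgda.2.1
  mul_mem _ _ _ _ ha hb := hgda.2.2.1 _ _ _ _ ha hb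
  toDecomposition := hgda.1.chooseDecomposition

theorem exists_homogeneous_intertwines {F : Type*} [FunLike F D D] [AddMonoidHomClass F D D]
    [Nontrivial D] {comp : G → Submodule ℝ D} (hgda : IsGDA comp) {ψ : F} (hψ : ∀ g, ∀ x ∈ comp g, ψ x ∈ comp g) {u : Dˣ}
    (hu : Intertwines ψ u) : ∃ g, ∃ d ∈ comp g, d ≠ 0 ∧ Intertwines ψ d := by
  let := hgda.gradedRing
  obtain ⟨i, hi⟩ :
      ∃ i, DirectSum.decompose (fun i : Additive G => comp i.toMul) (u : D) i ≠ 0 := by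
    by_contra! h
    exact u.ne_zero <| (DirectSum.decompose _).injective <| (DFinsupp.ext h).trans
      (DirectSum.decompose_zero _).symm
  exact ⟨i.toMul, _, SetLike.coe_mem _, fun h => hi (Subtype.ext h),
    Intertwines.coe_decompose (fun j => hψ j.toMul) hu i⟩

theorem exists_unit_eq_conj_of_intertwines {comp : G → Submodule ℝ D} (hgda : IsGDA comp)
    {φ : D ≃ₗ[ℝ] D} {φ' : D → D} (hanti : ∀ x y : D, φ (x * y) = φ y * φ x)
    (hinvol : ∀ x : D, φ (φ x) = x) (hinvol' : ∀ x : D, φ' (φ' x) = x) {g : G}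
    (hgr : ∀ x ∈ comp g, φ x ∈ comp g) {d : D} (hd : d ∈ comp g) (hd0 : d ≠ 0)
    (hint : Intertwines (φ' ∘ φ) d) :
    ∃ w : Dˣ, (w : D) ∈ comp g ∧ (φ (w : D) = w ∨ φ (w : D) = -(w : D)) ∧
      ∀ x : D, φ' x = (w : D) * φ x * (↑w⁻¹ : D) := by
  have unit_of_intertwines : ∀ e ∈ comp g, e ≠ 0 → Intertwines (φ' ∘ φ) e →
      ∃ w : Dˣ, (w : D) = e ∧ ∀ x, φ' x = w * φ x * (↑w⁻¹ : D) := fun e he he0 heint =>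
    ⟨(hgda.2.2.2 g e he he0).unit, rfl, heint.eq_conj hinvol⟩
  by_cases hskew : d + φ d = 0
  · obtain ⟨w, rfl, hw⟩ := unit_of_intertwines d hd hd0 hint
    exact ⟨w, hd, .inr (eq_neg_of_add_eq_zero_right hskew), hw⟩
  · have hsym : d + φ d ∈ comp g := add_mem hd (hgr d hd)
    obtain ⟨w, hwd, hw⟩ := unit_of_intertwines _ hsym hskew
      (hint.add (hint.map_of_antiInvolution hanti hinvol hinvol'))
    exact ⟨w, hwd ▸ hsym, .inl (by rw [hwd, map_add, hinvol, add_comm]), hw⟩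

end IsGDA

theorem stmt_6_general (comp : G → Submodule ℝ D) (hgda : IsGDA comp)
    (φ φ' : D ≃ₗ[ℝ] D)
    (hanti : ∀ x y : D, φ (x * y) = φ y * φ x)
    (hinvol : ∀ x : D, φ (φ x) = x)
    (hgr : ∀ (g : G), ∀ x ∈ comp g, φ x ∈ comp g)
    (hinvol' : ∀ x : D, φ' (φ' x) = x)
    (hgr' : ∀ (g : G), ∀ x ∈ comp g, φ' x ∈ comp g) :
    (∃ (g : G) (d : Dˣ), (d : D) ∈ comp g ∧ (φ (d : D) = d ∨ φ (d : D) = -(d : D)) ∧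
        ∀ x : D, φ' x = (d : D) * φ x * (↑d⁻¹ : D)) ↔
      ∃ u : Dˣ, ∀ x : D, φ' (φ x) = (u : D) * x * (↑u⁻¹ : D) := by
  constructor
  · rintro ⟨g, d, -, -, hφ'⟩
    exact ⟨d, fun x => by rw [hφ' (φ x), hinvol]⟩
  rintro ⟨u, hu⟩
  cases subsingleton_or_nontrivial D
  · exact ⟨1, 1, by simpa using hgda.2.1, .inl (Subsingleton.elim _ _),
      fun _ => Subsingleton.elim _ _⟩
  have hu' : Intertwines (φ' ∘ φ) (u : D) := fun x => by
    rw [Function.comp_apply, hu x, Units.inv_mul_cancel_right]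
  obtain ⟨g, d₀, hd₀, hd₀ne, hd₀int⟩ := hgda.exists_homogeneous_intertwines
    (ψ := φ.trans φ') (fun g x hx => hgr' g _ (hgr g x hx)) hu'
  replace hd₀int : Intertwines (φ' ∘ φ) d₀ := hd₀int
  exact ⟨g, hgda.exists_unit_eq_conj_of_intertwines hanti hinvol hinvol' (hgr g) hd₀ hd₀ne hd₀int⟩

/-- Two degree-preserving involutions `φ₀, φ₀'` of a real graded division algebra
satisfy `φ₀' = Int(d) φ₀` for some nonzero homogeneous `d` with `φ₀(d) = ±d`
(i.e. `φ₀ ∼ φ₀'`) if and only if `φ₀' φ₀⁻¹` is an inner automorphism. -/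
theorem stmt_6 (comp : G → Submodule ℝ D) (hgda : IsGDA comp)
    (hfd : FiniteDimensional ℝ ↥(comp (1 : G)))
    (φ φ' : D ≃ₗ[ℝ] D)
    (hanti : ∀ x y : D, φ (x * y) = φ y * φ x)
    (hinvol : ∀ x : D, φ (φ x) = x)
    (hgr : ∀ (g : G), ∀ x ∈ comp g, φ x ∈ comp g)
    (hanti' : ∀ x y : D, φ' (x * y) = φ' y * φ' x)
    (hinvol' : ∀ x : D, φ' (φ' x) = x)
    (hgr' : ∀ (g : G), ∀ x ∈ comp g, φ' x ∈ comp g) :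
    (∃ (g : G) (d : Dˣ), (d : D) ∈ comp g ∧ (φ (d : D) = d ∨ φ (d : D) = -(d : D)) ∧
        ∀ x : D, φ' x = (d : D) * φ x * (↑d⁻¹ : D)) ↔
      ∃ u : Dˣ, ∀ x : D, φ' (φ x) = (u : D) * x * (↑u⁻¹ : D) :=
  stmt_6_general comp hgda φ φ' hanti hinvol hgr hinvol' hgr'
end

section
/- Let D be a real graded division algebra with ℂ ≅ D_e not contained in Z(D), admitting a degree-preserving involution φ_0 restricting to conjugation on D_e. Then for every t ∈ T∖K, the element X_t² is central in D, where K = {t ∈ T | Int(X_t)|_{D_e} = id}. -/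
variable {G : Type*} [CommGroup G] [DecidableEq G] {D : Type*} [Ring D] [Algebra ℝ D]

/-- `t` belongs to `K`, i.e. `Int(X_t)` restricts to the identity on `D_e`. -/
def Kmem (comp : G → Submodule ℝ D) {T : Subgroup G} (X : ↥T → Dˣ) (t : ↥T) : Prop :=
  ∀ z ∈ comp (1 : G), (X t : D) * z = z * (X t : D)

/-!
The conjugation `φ` exhibits `D_e` as `ℝ ⊕ ℝ i` with `i * i = -1` and `φ i = -i`. For `t ∉ K`,
conjugation by `X_t` is an automorphism of `D_e ≅ ℂ` other than the identity, so it sends `i` to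
`-i`; hence `X_t z = φ(z) X_t` on `D_e`, and `X_t²` commutes with `D_e`. For any `s` write
`X_t X_s = w X_s X_t` with `w ∈ D_e`; then `X_t² X_s = φ(w) w X_s X_t²` where `ρ = φ(w) w ≥ 0`
is real. Applying the anti-automorphism `φ`, which fixes `X_t²` and scales `X_s` by `±1`, gives
`ρ² = 1`, so `ρ = 1`. Finally, every homogeneous element of `D` is `z X_s` with `z ∈ D_e`.
-/

theorem eq_or_eq_neg_of_mul_self_eq_mul_self {R : Type*} [Ring R] {a b : R} (hab : Commute a b)
    (h : a * a = b * b) (hunit : a - b ≠ 0 → IsUnit (a - b)) : a = b ∨ a = -b := by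
  by_cases hsub : a - b = 0
  · exact Or.inl (sub_eq_zero.mp hsub)
  · have hprod : (a + b) * (a - b) = 0 := by rw [← hab.mul_self_sub_mul_self_eq, h, sub_self]
    exact Or.inr (eq_neg_of_add_eq_zero_left ((hunit hsub).mul_left_eq_zero.mp hprod))

theorem neg_of_mul_self_eq_algebraMap {A : Type*} [Ring A] [Algebra ℝ A] {u : A} {c : ℝ}
    (hu : u * u = algebraMap ℝ A c) (hreal : u ∉ Set.range (algebraMap ℝ A))
    (hunit : ∀ q : ℝ, u - algebraMap ℝ A q ≠ 0 → IsUnit (u - algebraMap ℝ A q)) : c < 0 := by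
  by_contra! hc
  have hsq : u * u = algebraMap ℝ A √c * algebraMap ℝ A √c := by
    rw [hu, ← map_mul, Real.mul_self_sqrt hc]
  rcases eq_or_eq_neg_of_mul_self_eq_mul_self (Algebra.commute_algebraMap_right _ _) hsq
    (hunit _) with h | h
  · exact hreal ⟨_, h.symm⟩
  · exact hreal ⟨-√c, by rw [map_neg, h]⟩

theorem map_one_of_anti_involutive {A : Type*} [Semiring A] {φ : A → A}
    (hanti : ∀ x y, φ (x * y) = φ y * φ x) (hinvol : ∀ x, φ (φ x) = x) : φ 1 = 1 :=
  calc φ 1 = φ 1 * φ (φ 1) := by rw [hinvol, mul_one]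
    _ = φ (φ 1 * 1) := (hanti _ _).symm
    _ = 1 := by rw [mul_one, hinvol]

theorem eq_one_of_mul_eq_smul_mul {φ : D →ₗ[ℝ] D} (hanti : ∀ x y, φ (x * y) = φ y * φ x)
    {Y B : D} {ρ η : ℝ} (hρ : 0 ≤ ρ) (hη : η ≠ 0) (hφY : φ Y = Y) (hφB : φ B = η • B)
    (hBY : B * Y ≠ 0) (h : Y * B = ρ • (B * Y)) : ρ = 1 := by
  have h₁ : φ (Y * B) = η • (B * Y) := by rw [hanti, hφY, hφB, smul_mul_assoc]
  have h₂ : φ (Y * B) = (ρ * ρ * η) • (B * Y) := by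
    rw [h, map_smul, hanti, hφY, hφB, mul_smul_comm, h, smul_smul, smul_smul, mul_right_comm]
  have h₃ : (ρ * ρ * η - η) • (B * Y) = 0 := by rw [sub_smul, ← h₁, ← h₂, sub_self]
  have h₄ : ρ * ρ = 1 := by
    have := (smul_eq_zero.mp h₃).resolve_right hBY
    exact mul_right_cancel₀ hη (by linarith)
  nlinarith

section Conjugation

variable {E : Submodule ℝ D} {φ : D →ₗ[ℝ] D}

/-- `φ` acts on `E` as complex conjugation: traces `z + φ z` are real, norms `z * φ z` real and
nonnegative. -/
def IsConjugationOn (φ : D →ₗ[ℝ] D) (E : Submodule ℝ D) : Prop :=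
  ∀ z ∈ E, (∃ r : ℝ, z + φ z = algebraMap ℝ D r) ∧ ∃ r : ℝ, 0 ≤ r ∧ z * φ z = algebraMap ℝ D r

theorem exists_mul_self_eq_neg_one (hone : (1 : D) ∈ E) (hunit : ∀ a ∈ E, a ≠ 0 → IsUnit a)
    (hφE : ∀ x ∈ E, φ x ∈ E) (hinvol : ∀ x, φ (φ x) = x)
    (hconj : IsConjugationOn φ E)
    {z₀ : D} (hz₀ : z₀ ∈ E) (hz₀real : z₀ ∉ Set.range (algebraMap ℝ D)) :
    ∃ i ∈ E, i * i = -1 ∧ φ i = -i := by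
  obtain ⟨⟨r, hr⟩, s, -, hs⟩ := hconj z₀ hz₀
  have hmemE : ∀ q : ℝ, algebraMap ℝ D q ∈ E := fun q => by
    simpa [Algebra.algebraMap_eq_smul_one] using E.smul_mem q hone
  set u := z₀ - φ z₀ with hu_def
  have huE : u ∈ E := sub_mem hz₀ (hφE z₀ hz₀)
  have hφu : φ u = -u := by rw [map_sub, hinvol, neg_sub]
  -- `u = 2 z₀ - r` and `z₀ * z₀ = r z₀ - s`, since `φ z₀ = r - z₀`
  have huu : u * u = algebraMap ℝ D (r ^ 2 - 4 * s) := by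
    have hφz : φ z₀ = algebraMap ℝ D r - z₀ := eq_sub_of_add_eq' hr
    rw [hφz] at hs
    simp only [hu_def, hφz, Algebra.algebraMap_eq_smul_one] at hs ⊢
    simp only [mul_sub, sub_mul, smul_mul_assoc, mul_smul_comm, one_mul, mul_one] at hs ⊢
    linear_combination (norm := module) (-4 : ℝ) • hs
  have hreal : u ∉ Set.range (algebraMap ℝ D) := by
    rintro ⟨c, hc⟩
    rw [hu_def] at hc
    refine hz₀real ⟨(r + c) / 2, ?_⟩
    simp only [Algebra.algebraMap_eq_smul_one] at hr hc ⊢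
    linear_combination (norm := module) (-1 / 2 : ℝ) • hr + (1 / 2 : ℝ) • hc
  have hneg := neg_of_mul_self_eq_algebraMap huu hreal fun q => hunit _ (sub_mem huE (hmemE q))
  set k := √(4 * s - r ^ 2)
  have hk : k * k = -(r ^ 2 - 4 * s) := by rw [Real.mul_self_sqrt (by linarith)]; ring
  have hk0 : k ≠ 0 := by intro h; rw [h, mul_zero] at hk; linarith
  refine ⟨k⁻¹ • u, E.smul_mem _ huE, ?_, by rw [map_smul, hφu, smul_neg]⟩
  rw [smul_mul_smul_comm, huu, Algebra.algebraMap_eq_smul_one, smul_smul]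
  have hscalar : k⁻¹ * k⁻¹ * (r ^ 2 - 4 * s) = -1 := by
    rw [show r ^ 2 - 4 * s = -(k * k) by linarith]
    field_simp
  rw [hscalar, neg_one_smul]

theorem exists_eq_smul_of_map_eq_neg (hmulE : ∀ a ∈ E, ∀ b ∈ E, a * b ∈ E)
    (hcomm : ∀ z ∈ E, ∀ w ∈ E, z * w = w * z) (hanti : ∀ x y, φ (x * y) = φ y * φ x)
    (hconj : IsConjugationOn φ E)
    {i : D} (hi : i ∈ E) (hii : i * i = -1) (hφi : φ i = -i) {v : D} (hv : v ∈ E)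
    (hφv : φ v = -v) : ∃ b : ℝ, v = b • i := by
  obtain ⟨⟨r, hr⟩, -⟩ := hconj (v * i) (hmulE v hv i hi)
  rw [hanti, hφi, hφv, neg_mul_neg, ← hcomm v hv i hi, Algebra.algebraMap_eq_smul_one] at hr
  refine ⟨-(r / 2), ?_⟩
  have hv' : v = -(v * i * i) := by rw [mul_assoc, hii, mul_neg_one, neg_neg]
  rw [hv', show v * i = (r / 2) • (1 : D) by linear_combination (norm := module) (1 / 2 : ℝ) • hr,
    smul_mul_assoc, one_mul, neg_smul]

theorem exists_eq_smul_one_add_smul (hmulE : ∀ a ∈ E, ∀ b ∈ E, a * b ∈ E)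
    (hcomm : ∀ z ∈ E, ∀ w ∈ E, z * w = w * z) (hφE : ∀ x ∈ E, φ x ∈ E)
    (hanti : ∀ x y, φ (x * y) = φ y * φ x) (hinvol : ∀ x, φ (φ x) = x)
    (hconj : IsConjugationOn φ E)
    {i : D} (hi : i ∈ E) (hii : i * i = -1) (hφi : φ i = -i) {z : D} (hz : z ∈ E) :
    ∃ a b : ℝ, z = a • 1 + b • i := by
  obtain ⟨⟨r, hr⟩, -⟩ := hconj z hz
  obtain ⟨b, hb⟩ := exists_eq_smul_of_map_eq_neg hmulE hcomm hanti hconj hi hii hφi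
    (sub_mem hz (hφE z hz)) (by rw [map_sub, hinvol, neg_sub])
  refine ⟨r / 2, b / 2, ?_⟩
  rw [Algebra.algebraMap_eq_smul_one] at hr
  linear_combination (norm := module) (1 / 2 : ℝ) • hr + (1 / 2 : ℝ) • hb

theorem mul_eq_neg_mul_of_not_commute (hcomm : ∀ z ∈ E, ∀ w ∈ E, z * w = w * z)
    (hunit : ∀ a ∈ E, a ≠ 0 → IsUnit a) {i : D} (hi : i ∈ E) (hii : i * i = -1)
    (hspan : ∀ z ∈ E, ∃ a b : ℝ, z = a • 1 + b • i) {A : Dˣ} (hAi : (A : D) * i * ↑A⁻¹ ∈ E)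
    (hA : ¬∀ z ∈ E, (A : D) * z = z * A) : (A : D) * i = -(i * A) := by
  have hsq : (A * i * ↑A⁻¹) * (A * i * ↑A⁻¹) = i * i := by
    simp only [mul_assoc, Units.inv_mul_cancel_left]
    rw [← mul_assoc i, hii, neg_one_mul, mul_neg, Units.mul_inv]
  rcases eq_or_eq_neg_of_mul_self_eq_mul_self (hcomm _ hAi i hi) hsq (hunit _ (sub_mem hAi hi))
    with h | h
  · rw [Units.mul_inv_eq_iff_eq_mul] at h
    refine absurd (fun z hz => ?_) hA
    obtain ⟨a, b, rfl⟩ := hspan z hz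
    simp only [mul_add, add_mul, mul_smul_comm, smul_mul_assoc, mul_one, one_mul, h]
  · rwa [Units.mul_inv_eq_iff_eq_mul, neg_mul] at h

theorem mul_eq_map_mul (hφ1 : φ 1 = 1) {i : D} (hφi : φ i = -i)
    (hspan : ∀ z ∈ E, ∃ a b : ℝ, z = a • 1 + b • i) {A : D} (hAi : A * i = -(i * A)) :
    ∀ z ∈ E, A * z = φ z * A := by
  intro z hz
  obtain ⟨a, b, rfl⟩ := hspan z hz
  simp only [map_add, map_smul, hφ1, hφi, mul_add, add_mul, mul_smul_comm, smul_mul_assoc,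
    mul_one, one_mul, hAi, smul_neg, neg_mul]

theorem commute_mul_self_of_mul_eq_map_mul (hφE : ∀ x ∈ E, φ x ∈ E)
    (hinvol : ∀ x, φ (φ x) = x) {A : D} (hA : ∀ z ∈ E, A * z = φ z * A) {z : D} (hz : z ∈ E) :
    Commute (A * A) z :=
  calc A * A * z = A * φ z * A := by rw [mul_assoc, hA z hz, mul_assoc]
    _ = z * (A * A) := by rw [hA _ (hφE z hz), hinvol, mul_assoc]

theorem commute_mul_self_of_mul_eq_mul_mul (hcomm : ∀ z ∈ E, ∀ w ∈ E, z * w = w * z)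
    (hφE : ∀ x ∈ E, φ x ∈ E) (hanti : ∀ x y, φ (x * y) = φ y * φ x)
    (hconj : IsConjugationOn φ E)
    {A B w : D} (hA : ∀ z ∈ E, A * z = φ z * A) (hw : w ∈ E) (hAB : A * B = w * (B * A))
    (hφA : φ (A * A) = A * A) {η : ℝ} (hη : η ≠ 0) (hφB : φ B = η • B)
    (hBAA : B * (A * A) ≠ 0) : Commute (A * A) B := by
  obtain ⟨-, ρ, hρ, hwρ⟩ := hconj w hw
  have hAAB : A * A * B = ρ • (B * (A * A)) :=
    calc A * A * B = A * w * (B * A) := by rw [mul_assoc, hAB, mul_assoc]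
      _ = φ w * (A * B) * A := by rw [hA w hw]; simp only [mul_assoc]
      _ = w * φ w * (B * (A * A)) := by
          rw [hAB, hcomm w hw _ (hφE w hw)]; simp only [mul_assoc]
      _ = ρ • (B * (A * A)) := by rw [hwρ, Algebra.smul_def]
  have hρ1 := eq_one_of_mul_eq_smul_mul hanti hρ hη hφA hφB hBAA hAAB
  rwa [hρ1, one_smul] at hAAB

end Conjugation

theorem commute_of_forall_mem_of_isInternal {ι R A : Type*} [DecidableEq ι] [CommSemiring R]
    [Semiring A] [Module R A] {𝒜 : ι → Submodule R A} (hin : DirectSum.IsInternal 𝒜) {c : A}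
    (h : ∀ g, ∀ y ∈ 𝒜 g, Commute c y) (x : A) : Commute c x := by
  have hx : x ∈ ⨆ g, 𝒜 g := hin.submodule_iSup_eq_top ▸ Submodule.mem_top
  exact Submodule.iSup_induction 𝒜 (motive := Commute c) hx h (Commute.zero_right c)
    fun _ _ => Commute.add_right

section Graded

open DirectSum

variable {ι R A : Type*} [Group ι] [DecidableEq ι] [CommSemiring R] [Semiring A] [Module R A]
  {𝒜 : ι → Submodule R A}

theorem inv_mem_of_isInternal (hin : IsInternal 𝒜) (hone : (1 : A) ∈ 𝒜 1)
    (hmul : ∀ (g h : ι) (a b : A), a ∈ 𝒜 g → b ∈ 𝒜 h → a * b ∈ 𝒜 (g * h))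
    {g : ι} {a b : A} (ha : a ∈ 𝒜 g) (hab : a * b = 1) (hba : b * a = 1) : b ∈ 𝒜 g⁻¹ := by
  let _ : Decomposition 𝒜 := hin.chooseDecomposition
  -- left multiplication by `a` shifts degrees by `g`, so it commutes with taking components
  have hshift : ∀ x : A, a * (decompose 𝒜 x g⁻¹ : A) = decompose 𝒜 (a * x) 1 := by
    intro x
    induction x using Decomposition.inductionOn 𝒜 with
    | zero => simp
    | add x y hx hy => simp only [mul_add, decompose_add, DirectSum.add_apply,
        Submodule.coe_add, hx, hy]
    | @homogeneous k y =>
      have hay : a * y ∈ 𝒜 (g * k) := hmul _ _ _ _ ha y.2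
      by_cases hk : k = g⁻¹
      · subst hk
        rw [mul_inv_cancel] at hay
        rw [decompose_of_mem_same _ y.2, decompose_of_mem_same _ hay]
      · rw [decompose_of_mem_ne _ y.2 hk, decompose_of_mem_ne _ hay
          fun h => hk (eq_inv_of_mul_eq_one_right h), mul_zero]
  have hb : (decompose 𝒜 b g⁻¹ : A) = b := by
    have := hshift b
    rw [hab, decompose_of_mem_same _ hone] at this
    rw [← one_mul (decompose 𝒜 b g⁻¹ : A), ← hba, mul_assoc, this, mul_one]
  exact hb ▸ (decompose 𝒜 b g⁻¹).2

theorem mul_inv_mem_one_of_isInternal (hin : DirectSum.IsInternal 𝒜) (hone : (1 : A) ∈ 𝒜 1)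
    (hmul : ∀ (g h : ι) (a b : A), a ∈ 𝒜 g → b ∈ 𝒜 h → a * b ∈ 𝒜 (g * h))
    {g : ι} {x : A} {c : Aˣ} (hx : x ∈ 𝒜 g) (hc : (c : A) ∈ 𝒜 g) : x * ↑c⁻¹ ∈ 𝒜 1 := by
  simpa using hmul _ _ _ _ hx (inv_mem_of_isInternal hin hone hmul hc c.mul_inv c.inv_mul)

theorem commute_of_commute_mem_one_of_commute_units (hin : DirectSum.IsInternal 𝒜)
    (hone : (1 : A) ∈ 𝒜 1)
    (hmul : ∀ (g h : ι) (a b : A), a ∈ 𝒜 g → b ∈ 𝒜 h → a * b ∈ 𝒜 (g * h))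
    {T : Subgroup ι} (hT : ∀ g, 𝒜 g ≠ ⊥ → g ∈ T) (X : T → Aˣ) (hX : ∀ t : T, (X t : A) ∈ 𝒜 t)
    {c : A} (hone_comm : ∀ z ∈ 𝒜 1, Commute c z) (hX_comm : ∀ t, Commute c (X t)) (x : A) :
    Commute c x := by
  refine commute_of_forall_mem_of_isInternal hin (fun g y hy => ?_) x
  by_cases hg : 𝒜 g = ⊥
  · rw [hg, Submodule.mem_bot] at hy
    exact hy ▸ Commute.zero_right c
  · have hXg := hX ⟨g, hT g hg⟩
    rw [← Units.inv_mul_cancel_right y (X ⟨g, hT g hg⟩)]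
    exact (hone_comm _ (mul_inv_mem_one_of_isInternal hin hone hmul hy hXg)).mul_right
      (hX_comm _)

end Graded

theorem stmt_8_general (comp : G → Submodule ℝ D) (hgda : IsGDA comp)
    -- `D_e ≅ ℂ`
    (hcomm : ∀ z ∈ comp (1 : G), ∀ w ∈ comp (1 : G), z * w = w * z)
    -- `D_e` is not contained in the center of `D`
    (hnotcentral : ¬∀ z ∈ comp (1 : G), ∀ x : D, z * x = x * z)
    (T : Subgroup G) (hT : ∀ g : G, comp g ≠ ⊥ ↔ g ∈ T)
    (X : ↥T → Dˣ) (hX : ∀ t : ↥T, (X t : D) ∈ comp (t : G))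
    (φ : D ≃ₗ[ℝ] D)
    (hanti : ∀ x y : D, φ (x * y) = φ y * φ x)
    (hinvol : ∀ x : D, φ (φ x) = x)
    (hgr : ∀ (g : G), ∀ x ∈ comp g, φ x ∈ comp g)
    (hconj : ∀ z ∈ comp (1 : G),
      (∃ r : ℝ, z + φ z = algebraMap ℝ D r) ∧ ∃ r : ℝ, 0 ≤ r ∧ z * φ z = algebraMap ℝ D r)
    (η : ↥T → ℝ) (hη : ∀ t : ↥T, η t = 1 ∨ η t = -1)
    (hφX : ∀ t : ↥T, φ (X t : D) = η t • (X t : D)) :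
    ∀ t : ↥T, ¬Kmem comp X t → ∀ x : D, (X t : D) * (X t : D) * x = x * ((X t : D) * (X t : D)) := by
  intro t ht x
  obtain ⟨hin, hone, hmul, hunit⟩ := hgda
  have hmulE : ∀ a ∈ comp 1, ∀ b ∈ comp 1, a * b ∈ comp 1 := fun a ha b hb => by
    simpa using hmul 1 1 a b ha hb
  obtain ⟨z₀, hz₀, y, hz₀y⟩ : ∃ z ∈ comp 1, ∃ y : D, z * y ≠ y * z := by simpa using hnotcentral
  have : Nontrivial D := ⟨⟨_, _, hz₀y⟩⟩
  obtain ⟨i, hi, hii, hφi⟩ := exists_mul_self_eq_neg_one (φ := φ.toLinearMap) hone (hunit 1)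
    (hgr 1) hinvol hconj hz₀ (by rintro ⟨r, rfl⟩; exact hz₀y (Algebra.commutes r y))
  have hspan := fun z (hz : z ∈ comp 1) =>
    exists_eq_smul_one_add_smul hmulE hcomm (hgr 1) hanti hinvol hconj hi hii hφi hz
  have hXi := mul_eq_neg_mul_of_not_commute hcomm (hunit 1) hi hii hspan
    (mul_inv_mem_one_of_isInternal hin hone hmul (by simpa using hmul _ _ _ _ (hX t) hi) (hX t)) ht
  have hXE := mul_eq_map_mul (φ := φ.toLinearMap) (map_one_of_anti_involutive hanti hinvol) hφi
    hspan hXi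
  have hφX2 : φ (X t * X t : D) = X t * X t := by
    rw [hanti, hφX]; rcases hη t with h | h <;> simp [h]
  refine (commute_of_commute_mem_one_of_commute_units hin hone hmul (fun g hg => (hT g).1 hg) X hX
    (fun z hz => commute_mul_self_of_mul_eq_map_mul (hgr 1) hinvol hXE hz) (fun s => ?_) x).eq
  refine commute_mul_self_of_mul_eq_mul_mul hcomm (hgr 1) hanti hconj hXE
    (w := X t * X s * ↑(X s * X t)⁻¹) ?_ (by simp [mul_assoc]) hφX2 (η := η s) ?_ (hφX s) ?_
  · refine mul_inv_mem_one_of_isInternal hin hone hmul (hmul _ _ _ _ (hX t) (hX s)) ?_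
    rw [Units.val_mul, mul_comm (t : G)]
    exact hmul _ _ _ _ (hX s) (hX t)
  · rcases hη s with h | h <;> simp [h]
  · rw [← mul_assoc, ← Units.val_mul, ← Units.val_mul]
    exact Units.ne_zero _

/-- If `ℂ ≅ D_e ⊄ Z(D)` (here: `D_e` is commutative of real dimension 2 but not
central in `D`) and `D` admits a degree-preserving involution restricting to the
conjugation on `D_e`, then `X_t²` is central for every `t ∈ T ∖ K`. -/
theorem stmt_8 (comp : G → Submodule ℝ D) (hgda : IsGDA comp)
    (hfd : FiniteDimensional ℝ ↥(comp (1 : G)))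
    -- `D_e ≅ ℂ`
    (hcomm : ∀ z ∈ comp (1 : G), ∀ w ∈ comp (1 : G), z * w = w * z)
    (hrank : Module.finrank ℝ ↥(comp (1 : G)) = 2)
    -- `D_e` is not contained in the center of `D`
    (hnotcentral : ¬∀ z ∈ comp (1 : G), ∀ x : D, z * x = x * z)
    (T : Subgroup G) (hT : ∀ g : G, comp g ≠ ⊥ ↔ g ∈ T)
    (X : ↥T → Dˣ) (hX : ∀ t : ↥T, (X t : D) ∈ comp (t : G))
    (φ : D ≃ₗ[ℝ] D)
    (hanti : ∀ x y : D, φ (x * y) = φ y * φ x)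
    (hinvol : ∀ x : D, φ (φ x) = x)
    (hgr : ∀ (g : G), ∀ x ∈ comp g, φ x ∈ comp g)
    (hconj : ∀ z ∈ comp (1 : G),
      (∃ r : ℝ, z + φ z = algebraMap ℝ D r) ∧ ∃ r : ℝ, 0 ≤ r ∧ z * φ z = algebraMap ℝ D r)
    (η : ↥T → ℝ) (hη : ∀ t : ↥T, η t = 1 ∨ η t = -1)
    (hφX : ∀ t : ↥T, φ (X t : D) = η t • (X t : D)) :
    ∀ t : ↥T, ¬Kmem comp X t → ∀ x : D, (X t : D) * (X t : D) * x = x * ((X t : D) * (X t : D)) :=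
  stmt_8_general comp hgda hcomm hnotcentral T hT X hX φ hanti hinvol hgr hconj η hη hφX
end
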